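/- Let φ be a diffeomorphism of ℝⁿ. Then for all indices 1 ≤ i,j,k,ℓ ≤ n and every (x,y) ∈ ℝⁿ × GL(n,ℝ), the Bianchi identity holds: Σ_μ y^μ_k ∂/∂x^μ [γ^i_{jℓ}(φ)](x,y) − Σ_μ y^μ_ℓ ∂/∂x^μ [γ^i_{jk}(φ)](x,y) = Σ_s ( γ^s_{jk}(φ)(x,y)·γ^i_{sℓ}(φ)(x,y) − γ^s_{jℓ}(φ)(x,y)·γ^i_{sk}(φ)(x,y) ); that is, X_k(γ^i_{jℓ}(φ)) − X_ℓ(γ^i_{jk}(φ)) = γ^s_{jk}(φ)γ^i_{sℓ}(φ) − γ^s_{jℓ}(φ)γ^i_{sk}(φ), where X_k f(x,y) = Σ_μ y^μ_k ∂f/∂x^μ. -/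

import Mathlib

noncomputable section

/-- A `C^∞` diffeomorphism of `ℝⁿ` (a bijective `C^∞` map with `C^∞` inverse). -/
structure Diffeo (n : ℕ) where
  toFun : (Fin n → ℝ) → (Fin n → ℝ)
  invFun : (Fin n → ℝ) → (Fin n → ℝ)
  left_inv : Function.LeftInverse invFun toFun
  right_inv : Function.RightInverse invFun toFun
  smooth_toFun : ContDiff ℝ (⊤ : ℕ∞) toFun
  smooth_invFun : ContDiff ℝ (⊤ : ℕ∞) invFun

/-- Membership in the group `G` of invertible affine transformations of `ℝⁿ`:
maps `x ↦ A·x + b` with `A ∈ GL(n,ℝ)`, `b ∈ ℝⁿ`. -/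
def IsAffineMap (n : ℕ) (f : (Fin n → ℝ) → (Fin n → ℝ)) : Prop :=
  ∃ A : Matrix (Fin n) (Fin n) ℝ, IsUnit A ∧ ∃ b : Fin n → ℝ, ∀ x, f x = A.mulVec x + b

/-- Membership in the group `N` of diffeomorphisms `ψ` with `ψ(0) = 0` and `Dψ(0) = Id`. -/
def InN (n : ℕ) (ψ : Diffeo n) : Prop :=
  ψ.toFun 0 = 0 ∧ fderiv ℝ ψ.toFun 0 = ContinuousLinearMap.id ℝ (Fin n → ℝ)

/-- The Jacobian matrix of `f` at `x`: entry `(i,j)` is `∂ⱼ f^i (x)`. -/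
def jacobianM (n : ℕ) (f : (Fin n → ℝ) → (Fin n → ℝ)) (x : Fin n → ℝ) :
    Matrix (Fin n) (Fin n) ℝ :=
  Matrix.of fun i j => fderiv ℝ f x (Pi.single j 1) i

/-- The second-order partial derivative `∂ⱼ∂ₖ f^i (x)`. -/
def secondPartial (n : ℕ) (f : (Fin n → ℝ) → (Fin n → ℝ)) (i j k : Fin n)
    (x : Fin n → ℝ) : ℝ :=
  fderiv ℝ (fun z => fderiv ℝ f z (Pi.single k 1) i) x (Pi.single j 1)

/-- The cocycle `γ^i_{jk}(f)(x,y) = Σ (y⁻¹)^i_λ (f'(x)⁻¹)^λ_ρ ∂_μ∂_ν f^ρ(x) y^ν_j y^μ_k`. -/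
def gammaFn (n : ℕ) (f : (Fin n → ℝ) → (Fin n → ℝ)) (i j k : Fin n)
    (x : Fin n → ℝ) (y : Fin n → Fin n → ℝ) : ℝ :=
  ∑ lam : Fin n, ∑ ρ : Fin n, ∑ μ : Fin n, ∑ ν : Fin n,
    (Matrix.of y)⁻¹ i lam * (jacobianM n f x)⁻¹ lam ρ
      * secondPartial n f ρ μ ν x * y ν j * y μ k

/-!
Write `A = φ'` as a map into the algebra of endomorphisms of `ℝⁿ` and `ω(w) = A⁻¹ ∂_w A` for its
left logarithmic derivative. Then `γ^i_{jk}(φ)(x,y)` is the `i`-th coordinate of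
`y⁻¹ ω(y e_k) (y e_j)`, so `γ(φ)` is `ω` read in the frame `y`. Differentiating `A⁻¹` gives
`∂_v ω(w) = -ω(v) ω(w) + A⁻¹ ∂_v ∂_w A`, and the symmetry of second derivatives turns this into
the Maurer–Cartan equation `∂_v ω(w) - ∂_w ω(v) = ω(w) ω(v) - ω(v) ω(w)`. Taking `v = y e_k`,
`w = y e_ℓ` and conjugating by `y` gives the Bianchi identity.
-/

section LeftLogFDeriv

variable {𝕜 E R : Type*} [RCLike 𝕜] [NormedAddCommGroup E] [NormedSpace 𝕜 E]
  [NormedRing R] [NormedAlgebra 𝕜 R] [HasSummableGeomSeries R]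

variable (𝕜) in
def leftLogFDeriv (A : E → R) (z w : E) : R :=
  Ring.inverse (A z) * fderiv 𝕜 A z w

theorem fderiv_ringInverse_comp {A : E → R} {x : E} (hA : DifferentiableAt 𝕜 A x)
    (hx : IsUnit (A x)) (v : E) :
    fderiv 𝕜 (fun z => Ring.inverse (A z)) x v
      = -(Ring.inverse (A x) * fderiv 𝕜 A x v * Ring.inverse (A x)) := by
  obtain ⟨u, hu⟩ := hx
  have hinv := hasFDerivAt_ringInverse (𝕜 := 𝕜) u
  rw [hu] at hinv
  rw [show (fun z => Ring.inverse (A z)) = Ring.inverse ∘ A from rfl,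
    (hinv.comp x hA.hasFDerivAt).fderiv, ← hu, ← Ring.inverse_unit]
  simp

theorem differentiableAt_leftLogFDeriv {A : E → R} {x : E} (hA : ContDiffAt 𝕜 2 A x)
    (hx : IsUnit (A x)) (w : E) : DifferentiableAt 𝕜 (fun z => leftLogFDeriv 𝕜 A z w) x :=
  ((hA.differentiableAt (by norm_num)).inverse hx).mul
    (((hA.fderiv_right (m := 1) (by norm_num)).differentiableAt one_ne_zero).clm_apply
      (differentiableAt_const w))

theorem fderiv_leftLogFDeriv {A : E → R} {x : E} (hA : ContDiffAt 𝕜 2 A x)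
    (hx : IsUnit (A x)) (v w : E) :
    fderiv 𝕜 (fun z => leftLogFDeriv 𝕜 A z w) x v
      = -(leftLogFDeriv 𝕜 A x v * leftLogFDeriv 𝕜 A x w)
        + Ring.inverse (A x) * fderiv 𝕜 (fderiv 𝕜 A) x v w := by
  have hA1 : DifferentiableAt 𝕜 A x := hA.differentiableAt (by norm_num)
  have hA2 : DifferentiableAt 𝕜 (fderiv 𝕜 A) x :=
    (hA.fderiv_right (m := 1) (by norm_num)).differentiableAt one_ne_zero
  unfold leftLogFDeriv
  rw [fderiv_fun_mul' (hA1.inverse hx) (hA2.clm_apply (differentiableAt_const w)),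
    fderiv_clm_apply hA2 (differentiableAt_const w)]
  simp only [add_apply, smul_apply, smul_eq_mul]
  rw [fderiv_ringInverse_comp hA1 hx, fderiv_const_apply]
  simp only [ContinuousLinearMap.comp_zero, zero_apply, zero_add,
    ContinuousLinearMap.flip_apply, op_smul_eq_mul]
  noncomm_ring

theorem leftLogFDeriv_maurerCartan {A : E → R} {x : E} (hA : ContDiffAt 𝕜 2 A x)
    (hx : IsUnit (A x)) (v w : E) :
    fderiv 𝕜 (fun z => leftLogFDeriv 𝕜 A z w) x v - fderiv 𝕜 (fun z => leftLogFDeriv 𝕜 A z v) x w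
      = leftLogFDeriv 𝕜 A x w * leftLogFDeriv 𝕜 A x v
        - leftLogFDeriv 𝕜 A x v * leftLogFDeriv 𝕜 A x w := by
  rw [fderiv_leftLogFDeriv hA hx, fderiv_leftLogFDeriv hA hx,
    (hA.isSymmSndFDerivAt (by simp)).eq v w]
  abel

end LeftLogFDeriv

section Coordinates

open Matrix

theorem apply_eq_sum_smul_single {ι R M F : Type*} [Fintype ι] [DecidableEq ι] [CommSemiring R]
    [AddCommMonoid M] [Module R M] [FunLike F (ι → R) M] [LinearMapClass F R (ι → R) M]
    (L : F) (v : ι → R) :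
    L v = ∑ i, v i • L (Pi.single i 1) := by
  conv_lhs => rw [← Finset.univ_sum_single v]
  rw [map_sum]
  refine Finset.sum_congr rfl fun i _ => ?_
  rw [← map_smul, ← Pi.single_smul, smul_eq_mul, mul_one]

theorem sum_inv_mulVec_mul_inv_mulVec {ι K F : Type*} [Fintype ι] [DecidableEq ι] [CommRing K]
    [FunLike F (ι → K) (ι → K)] [LinearMapClass F K (ι → K) (ι → K)]
    {y : ι → ι → K} (hy : IsUnit (of y)) (T : F) (u : ι → K) (i : ι) :
    ∑ s, ((of y)⁻¹ *ᵥ u) s * ((of y)⁻¹ *ᵥ T (fun μ => y μ s)) i = ((of y)⁻¹ *ᵥ T u) i := by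
  let L : (ι → K) →ₗ[K] K :=
    (LinearMap.proj i) ∘ₗ toLin' (of y)⁻¹ ∘ₗ (T : (ι → K) →ₗ[K] (ι → K)) ∘ₗ toLin' (of y)
  have hL := apply_eq_sum_smul_single L ((of y)⁻¹ *ᵥ u)
  simp only [L, LinearMap.comp_apply, toLin'_apply, mulVec_single_one, LinearMap.proj_apply,
    mulVec_mulVec, mul_nonsing_inv _ ((isUnit_iff_isUnit_det _).mp hy), one_mulVec,
    smul_eq_mul] at hL
  exact hL.symm

theorem fderiv_mulVec_clm_apply {E ι : Type*} [NormedAddCommGroup E] [NormedSpace ℝ E]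
    [Fintype ι] [DecidableEq ι] {g : E → ((ι → ℝ) →L[ℝ] (ι → ℝ))} {x : E}
    (hg : DifferentiableAt ℝ g x) (M : Matrix ι ι ℝ) (u : ι → ℝ) (a : ι) (v : E) :
    fderiv ℝ (fun z => (M *ᵥ g z u) a) x v = (M *ᵥ fderiv ℝ g x v u) a := by
  let Φ : ((ι → ℝ) →L[ℝ] (ι → ℝ)) →L[ℝ] ℝ := (ContinuousLinearMap.proj a).comp
    ((LinearMap.toContinuousLinearMap (toLin' M)).comp (ContinuousLinearMap.apply ℝ _ u))
  change fderiv ℝ (Φ ∘ g) x v = Φ (fderiv ℝ g x v)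
  rw [(Φ.hasFDerivAt.comp x hg.hasFDerivAt).fderiv]
  rfl

variable {n : ℕ} {f : (Fin n → ℝ) → (Fin n → ℝ)} {x : Fin n → ℝ}

theorem jacobianM_eq_toMatrix' :
    jacobianM n f x = LinearMap.toMatrix' (fderiv ℝ f x : (Fin n → ℝ) →ₗ[ℝ] (Fin n → ℝ)) := by
  ext i j
  simp [jacobianM, LinearMap.toMatrix'_apply]

theorem inv_jacobianM_mulVec (hf : IsUnit (fderiv ℝ f x)) (u : Fin n → ℝ) :
    (jacobianM n f x)⁻¹ *ᵥ u = Ring.inverse (fderiv ℝ f x) u := by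
  have hmul : jacobianM n f x * LinearMap.toMatrix' (Ring.inverse (fderiv ℝ f x)).toLinearMap
      = 1 := by
    rw [jacobianM_eq_toMatrix', ← LinearMap.toMatrix'_mul, ← ContinuousLinearMap.toLinearMap_mul,
      Ring.mul_inverse_cancel _ hf, ContinuousLinearMap.toLinearMap_one, LinearMap.toMatrix'_one]
  rw [inv_eq_right_inv hmul, LinearMap.toMatrix'_mulVec, ContinuousLinearMap.coe_coe]

theorem secondPartial_eq (hf : DifferentiableAt ℝ (fderiv ℝ f) x) (ρ μ ν : Fin n) :
    secondPartial n f ρ μ ν x = fderiv ℝ (fderiv ℝ f) x (Pi.single μ 1) (Pi.single ν 1) ρ := by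
  rw [secondPartial, fderiv_apply (hf.clm_apply (differentiableAt_const _)),
    fderiv_clm_apply hf (differentiableAt_const _)]
  simp

theorem bilinear_apply_eq_sum {B : (Fin n → ℝ) →L[ℝ] (Fin n → ℝ) →L[ℝ] (Fin n → ℝ)}
    (v w : Fin n → ℝ) (ρ : Fin n) :
    B v w ρ = ∑ μ, ∑ ν, v μ * w ν * B (Pi.single μ 1) (Pi.single ν 1) ρ := by
  rw [apply_eq_sum_smul_single B v]
  simp only [_root_.sum_apply, Finset.sum_apply, _root_.smul_apply, Pi.smul_apply, smul_eq_mul]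
  refine Finset.sum_congr rfl fun μ _ => ?_
  rw [apply_eq_sum_smul_single (B (Pi.single μ 1)) w]
  simp only [Finset.sum_apply, Pi.smul_apply, smul_eq_mul, Finset.mul_sum, mul_assoc]

theorem gammaFn_eq_leftLogFDeriv (hf : DifferentiableAt ℝ (fderiv ℝ f) x)
    (hu : IsUnit (fderiv ℝ f x)) (i j k : Fin n) (y : Fin n → Fin n → ℝ) :
    gammaFn n f i j k x y = ((Matrix.of y)⁻¹ *ᵥ
      leftLogFDeriv ℝ (fderiv ℝ f) x (fun μ => y μ k) (fun ν => y ν j)) i := by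
  simp only [leftLogFDeriv, mul_apply_eq_comp, ← inv_jacobianM_mulVec hu,
    bilinear_apply_eq_sum, ← secondPartial_eq hf, gammaFn, mulVec, dotProduct, Finset.mul_sum]
  refine Finset.sum_congr rfl fun lam _ => Finset.sum_congr rfl fun ρ _ =>
    Finset.sum_congr rfl fun μ _ => Finset.sum_congr rfl fun ν _ => ?_
  ring

theorem gammaFn_bianchi (hf : ContDiff ℝ 3 f) (hu : ∀ z, IsUnit (fderiv ℝ f z)) (i j k ℓ : Fin n)
    (y : Fin n → Fin n → ℝ) (hy : IsUnit (Matrix.of y)) :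
    (∑ μ : Fin n, y μ k *
        fderiv ℝ (fun x' => gammaFn n f i j ℓ x' y) x (Pi.single μ 1))
      - (∑ μ : Fin n, y μ ℓ *
          fderiv ℝ (fun x' => gammaFn n f i j k x' y) x (Pi.single μ 1))
      = ∑ s : Fin n,
          (gammaFn n f s j k x y * gammaFn n f i s ℓ x y
            - gammaFn n f s j ℓ x y * gammaFn n f i s k x y) := by
  have hA : ContDiff ℝ 2 (fderiv ℝ f) := hf.fderiv_right (by norm_num)
  have hA' : ∀ z, DifferentiableAt ℝ (fderiv ℝ f) z := fun z =>
    (hA.differentiable (by norm_num)) z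
  have hγ : ∀ a b c z, gammaFn n f a b c z y = ((of y)⁻¹ *ᵥ
      leftLogFDeriv ℝ (fderiv ℝ f) z (fun μ => y μ c) (fun ν => y ν b)) a :=
    fun a b c z => gammaFn_eq_leftLogFDeriv (hA' z) (hu z) a b c y
  have hX : ∀ c d, ∑ μ, y μ d * fderiv ℝ (fun x' => gammaFn n f i j c x' y) x (Pi.single μ 1)
      = ((of y)⁻¹ *ᵥ fderiv ℝ (fun z => leftLogFDeriv ℝ (fderiv ℝ f) z (fun μ => y μ c)) x
          (fun μ => y μ d) (fun ν => y ν j)) i := by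
    intro c d
    simp only [← smul_eq_mul, ← apply_eq_sum_smul_single, hγ]
    exact fderiv_mulVec_clm_apply (differentiableAt_leftLogFDeriv hA.contDiffAt (hu x) _) _ _ _ _
  simp only [hX, hγ _ _ _ x, Finset.sum_sub_distrib, sum_inv_mulVec_mul_inv_mulVec hy]
  rw [← Pi.sub_apply, ← mulVec_sub, ← _root_.sub_apply,
    leftLogFDeriv_maurerCartan hA.contDiffAt (hu x), _root_.sub_apply, mulVec_sub, Pi.sub_apply,
    mul_apply_eq_comp, mul_apply_eq_comp]

end Coordinates

theorem Diffeo.isUnit_fderiv (φ : Diffeo n) (x : Fin n → ℝ) : IsUnit (fderiv ℝ φ.toFun x) := by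
  have hf : Differentiable ℝ φ.toFun := φ.smooth_toFun.differentiable (by simp)
  have hg : Differentiable ℝ φ.invFun := φ.smooth_invFun.differentiable (by simp)
  have hgf : fderiv ℝ φ.invFun (φ.toFun x) * fderiv ℝ φ.toFun x = 1 := by
    have h := fderiv_comp x (hg (φ.toFun x)) (hf x)
    rw [φ.left_inv.comp_eq_id, fderiv_id] at h
    exact h.symm
  have hfg : fderiv ℝ φ.toFun x * fderiv ℝ φ.invFun (φ.toFun x) = 1 := by
    have h := fderiv_comp (φ.toFun x) (hf (φ.invFun (φ.toFun x))) (hg (φ.toFun x))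
    rw [φ.right_inv.comp_eq_id, fderiv_id, φ.left_inv x] at h
    exact h.symm
  exact ⟨⟨_, _, hfg, hgf⟩, rfl⟩

/-- **Bianchi identity**: `X_k(γ^i_{jℓ}(φ)) − X_ℓ(γ^i_{jk}(φ))
  = Σ_s (γ^s_{jk}(φ)γ^i_{sℓ}(φ) − γ^s_{jℓ}(φ)γ^i_{sk}(φ))`,
where `X_k f(x,y) = Σ_μ y^μ_k ∂f/∂x^μ`. -/
theorem stmt6 (n : ℕ) (φ : Diffeo n) (i j k ℓ : Fin n) (x : Fin n → ℝ)
    (y : Fin n → Fin n → ℝ) (hy : IsUnit (Matrix.of y)) :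
    (∑ μ : Fin n, y μ k *
        fderiv ℝ (fun x' => gammaFn n φ.toFun i j ℓ x' y) x (Pi.single μ 1))
      - (∑ μ : Fin n, y μ ℓ *
          fderiv ℝ (fun x' => gammaFn n φ.toFun i j k x' y) x (Pi.single μ 1))
      = ∑ s : Fin n,
          (gammaFn n φ.toFun s j k x y * gammaFn n φ.toFun i s ℓ x y
            - gammaFn n φ.toFun s j ℓ x y * gammaFn n φ.toFun i s k x y) :=
  gammaFn_bianchi (φ.smooth_toFun.of_le (WithTop.coe_le_coe.mpr le_top)) φ.isUnit_fderiv
    i j k ℓ y hy
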